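/- The set Rec_{p×q}(K) of recurrence matrices (functions A : M_{p×q} → K with finite-dimensional recursive closure) is a recursively closed K-vector subspace of K^{M_{p×q}}: it is closed under addition, scalar multiplication, and the shift operators ρ(s,t). -/
import Mathlib


/-- The free monoid `M_{p×q}` of pairs of equal-length words. -/
def EqPair (p q : ℕ) : Type :=
  {x : List (Fin p) × List (Fin q) // x.1.length = x.2.length}

/-- The single-letter shift operator `ρ(s,t)`: `(ρ(s,t)A)[U,W] = A[Us,Wt]`. -/
def shiftL (p q : ℕ) (K : Type*) [Field K] (s : Fin p) (t : Fin q) :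
    (EqPair p q → K) →ₗ[K] (EqPair p q → K) where
  toFun A := fun x => A ⟨(x.1.1 ++ [s], x.1.2 ++ [t]), by simp [x.2]⟩
  map_add' _ _ := rfl
  map_smul' _ _ := rfl

/-- A subspace of `K^{M_{p×q}}` is recursively closed if it is stable under
all shift operators. -/
def RecClosed (p q : ℕ) (K : Type*) [Field K]
    (V : Submodule K (EqPair p q → K)) : Prop :=
  ∀ (s : Fin p) (t : Fin q), ∀ A ∈ V, shiftL p q K s t A ∈ V

/-- The recursive closure of `A`: the smallest recursively closed subspace
containing `A`. -/
def recClosure (p q : ℕ) (K : Type*) [Field K] (A : EqPair p q → K) :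
    Submodule K (EqPair p q → K) :=
  sInf {V | A ∈ V ∧ RecClosed p q K V}

/-- `A` is a recurrence matrix if its recursive closure is
finite-dimensional. -/
def IsRecMatrix (p q : ℕ) (K : Type*) [Field K] (A : EqPair p q → K) : Prop :=
  FiniteDimensional K (recClosure p q K A)

/-- The matrix product `(A·B)[U,W] = ∑_V A[U,V] B[V,W]`. -/
def matMul {p r q : ℕ} {K : Type*} [Field K]
    (A : EqPair p r → K) (B : EqPair r q → K) : EqPair p q → K :=
  fun x => ∑ V : Fin x.1.1.length → Fin r,
    A ⟨(x.1.1, List.ofFn V), by simp⟩ * B ⟨(List.ofFn V, x.1.2), by simp [x.2]⟩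

lemma mem_recClosure (p q : ℕ) (K : Type*) [Field K] (A : EqPair p q → K) :
    A ∈ recClosure p q K A := by
  simp only [recClosure, Submodule.mem_sInf]
  exact fun V hV => hV.1

lemma recClosed_recClosure (p q : ℕ) (K : Type*) [Field K] (A : EqPair p q → K) :
    RecClosed p q K (recClosure p q K A) := by
  intro s t B hB
  simp only [recClosure, Submodule.mem_sInf] at hB ⊢
  exact fun V hV => hV.2 s t B (hB V hV)

lemma recClosure_le (p q : ℕ) (K : Type*) [Field K] (A : EqPair p q → K)
    (V : Submodule K (EqPair p q → K)) (hA : A ∈ V) (hV : RecClosed p q K V) :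
    recClosure p q K A ≤ V :=
  sInf_le ⟨hA, hV⟩

lemma recClosed_sup (p q : ℕ) (K : Type*) [Field K]
    (V W : Submodule K (EqPair p q → K)) (hV : RecClosed p q K V)
    (hW : RecClosed p q K W) : RecClosed p q K (V ⊔ W) := by
  intro s t B hB
  rw [Submodule.mem_sup] at hB ⊢
  obtain ⟨v, hv, w, hw, rfl⟩ := hB
  exact ⟨_, hV s t v hv, _, hW s t w hw, (shiftL p q K s t).map_add v w⟩

/-- The set of recurrence matrices is a recursively closed vector subspace of
`K^{M_{p×q}}`: closed under addition, scalar multiplication and shifts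
(and contains `0`). -/
theorem isRecMatrix_subspace (p q : ℕ) (K : Type*) [Field K] :
    IsRecMatrix p q K (0 : EqPair p q → K) ∧
    (∀ A B : EqPair p q → K, IsRecMatrix p q K A → IsRecMatrix p q K B →
      IsRecMatrix p q K (A + B)) ∧
    (∀ (c : K) (A : EqPair p q → K), IsRecMatrix p q K A →
      IsRecMatrix p q K (c • A)) ∧
    (∀ (s : Fin p) (t : Fin q) (A : EqPair p q → K), IsRecMatrix p q K A →
      IsRecMatrix p q K (shiftL p q K s t A)) := by
  refine ⟨?_, ?_, ?_, ?_⟩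
  · have h : recClosure p q K (0 : EqPair p q → K) ≤ ⊥ :=
      recClosure_le p q K 0 ⊥ (Submodule.zero_mem ⊥) (by intro s t B hB; simp_all)
    have : recClosure p q K (0 : EqPair p q → K) = ⊥ := le_bot_iff.mp h
    rw [IsRecMatrix, this]
    infer_instance
  · intro A B hA hB
    haveI : FiniteDimensional K ↥(recClosure p q K A) := hA
    haveI : FiniteDimensional K ↥(recClosure p q K B) := hB
    have hsup : FiniteDimensional K ↥(recClosure p q K A ⊔ recClosure p q K B) :=
      Submodule.finiteDimensional_sup _ _
    have h : recClosure p q K (A + B) ≤ recClosure p q K A ⊔ recClosure p q K B :=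
      recClosure_le p q K (A + B) _
        (Submodule.add_mem_sup (mem_recClosure p q K A) (mem_recClosure p q K B))
        (recClosed_sup p q K _ _ (recClosed_recClosure p q K A)
          (recClosed_recClosure p q K B))
    exact Submodule.finiteDimensional_of_le h
  · intro c A hA
    haveI : FiniteDimensional K ↥(recClosure p q K A) := hA
    have h : recClosure p q K (c • A) ≤ recClosure p q K A :=
      recClosure_le p q K (c • A) _
        (Submodule.smul_mem _ c (mem_recClosure p q K A))
        (recClosed_recClosure p q K A)
    exact Submodule.finiteDimensional_of_le h
  · intro s t A hA
    haveI : FiniteDimensional K ↥(recClosure p q K A) := hA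
    have h : recClosure p q K (shiftL p q K s t A) ≤ recClosure p q K A :=
      recClosure_le p q K _ _
        (recClosed_recClosure p q K A s t A (mem_recClosure p q K A))
        (recClosed_recClosure p q K A)
    exact Submodule.finiteDimensional_of_le h
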